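/- arXiv:1806.03533 — 2 statements merged into one kernel-verified Lean document; each statement's English description precedes it below -/
import Mathlib

section
/- The unit square [0,1]² is positively invariant for the flow of the system w' = r_w w(1-w), g' = r_g g(1-g-w): if (w_0,g_0) ∈ [0,1]², then the solution satisfies (w(t),g(t)) ∈ [0,1]² for all t ≥ 0. -/
open Set Topology Filter

/-- If `f 0 ≤ 1` and the derivative of `f` is negative whenever `f > 1`, then `f ≤ 1`
for all `t ≥ 0`. -/
lemma stay_le_one (f F : ℝ → ℝ)
    (hf : ∀ u, 0 ≤ u → HasDerivAt f (F u) u)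
    (hneg : ∀ u, 0 ≤ u → 1 < f u → F u < 0)
    (h0 : f 0 ≤ 1) : ∀ t, 0 ≤ t → f t ≤ 1 := by
  intro t ht
  by_contra hlt
  push_neg at hlt
  have hcont : ContinuousOn f (Icc 0 t) := fun u hu =>
    ((hf u hu.1).continuousAt).continuousWithinAt
  set S := Icc (0:ℝ) t ∩ f ⁻¹' Iic 1 with hS
  have hSclosed : IsClosed S :=
    hcont.preimage_isClosed_of_isClosed isClosed_Icc isClosed_Iic
  have h0S : (0:ℝ) ∈ S := ⟨⟨le_refl 0, ht⟩, h0⟩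
  have hbdd : BddAbove S := ⟨t, fun u hu => hu.1.2⟩
  set s := sSup S with hs
  have hsS : s ∈ S := hSclosed.csSup_mem ⟨0, h0S⟩ hbdd
  have hst : s < t := by
    rcases lt_or_eq_of_le hsS.1.2 with h | h
    · exact h
    · exact absurd (h ▸ hsS.2) (not_le.2 hlt)
  have hgt : ∀ u ∈ Ioc s t, 1 < f u := by
    intro u hu
    by_contra h
    push_neg at h
    exact absurd (le_csSup hbdd ⟨⟨le_trans hsS.1.1 hu.1.le, hu.2⟩, h⟩) (not_le.2 hu.1)
  have hanti : StrictAntiOn f (Icc s t) := by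
    apply strictAntiOn_of_deriv_neg (convex_Icc s t)
    · exact hcont.mono (Icc_subset_Icc hsS.1.1 le_rfl)
    · intro x hx
      rw [interior_Icc] at hx
      have hx0 : 0 ≤ x := le_trans hsS.1.1 hx.1.le
      rw [(hf x hx0).deriv]
      exact hneg x hx0 (hgt x ⟨hx.1, hx.2.le⟩)
  have := hanti (left_mem_Icc.2 hst.le) (right_mem_Icc.2 hst.le) hst
  have hfs : f s ≤ 1 := hsS.2
  linarith

/-- If `f 0 ≥ 0` and `f` solves `f' = c · f` with `c` continuous on `[0, ∞)`, then `f ≥ 0`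
for all `t ≥ 0` (by a Grönwall argument: once `f` hits 0 it stays 0). -/
lemma stay_nonneg (f c : ℝ → ℝ)
    (hf : ∀ u, 0 ≤ u → HasDerivAt f (c u * f u) u)
    (hc : ContinuousOn c (Ici 0))
    (h0 : 0 ≤ f 0) : ∀ t, 0 ≤ t → 0 ≤ f t := by
  intro t ht
  by_contra hlt
  push_neg at hlt
  have hcont : ContinuousOn f (Icc 0 t) := fun u hu =>
    ((hf u hu.1).continuousAt).continuousWithinAt
  set S := Icc (0:ℝ) t ∩ f ⁻¹' Ici 0 with hS
  have hSclosed : IsClosed S :=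
    hcont.preimage_isClosed_of_isClosed isClosed_Icc isClosed_Ici
  have h0S : (0:ℝ) ∈ S := ⟨⟨le_refl 0, ht⟩, h0⟩
  have hbdd : BddAbove S := ⟨t, fun u hu => hu.1.2⟩
  set s := sSup S with hs
  have hsS : s ∈ S := hSclosed.csSup_mem ⟨0, h0S⟩ hbdd
  have hs0 : 0 ≤ s := hsS.1.1
  have hst : s < t := by
    rcases lt_or_eq_of_le hsS.1.2 with h | h
    · exact h
    · exact absurd (h ▸ hsS.2) (not_le.2 hlt)
  -- f s = 0
  have hfs : f s = 0 := by
    have h0fs : (0:ℝ) ≤ f s := hsS.2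
    rcases lt_or_eq_of_le h0fs with hpos | h
    · exfalso
      have hev : ∀ᶠ u in 𝓝 s, 0 < f u :=
        (hf s hs0).continuousAt.eventually_mem (Ioi_mem_nhds hpos)
      have hev' : ∀ᶠ u in 𝓝[>] s, 0 < f u := hev.filter_mono nhdsWithin_le_nhds
      have hmem : Ioc s t ∈ 𝓝[>] s := Ioc_mem_nhdsGT hst
      obtain ⟨u, hu1, hu2⟩ := (hev'.and (Filter.eventually_of_mem hmem fun x hx => hx)).exists
      have : u ∈ S := ⟨⟨le_trans hs0 hu2.1.le, hu2.2⟩, hu1.le⟩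
      exact absurd (le_csSup hbdd this) (not_le.2 hu2.1)
    · exact h.symm
  -- Grönwall on [s, t]
  obtain ⟨C, hC⟩ := isCompact_Icc.exists_bound_of_continuousOn
    (hc.mono (fun x (hx : x ∈ Icc s t) => le_trans hs0 hx.1))
  have key := norm_le_gronwallBound_of_norm_deriv_right_le
    (f := f) (f' := fun u => c u * f u) (δ := 0) (K := C) (ε := 0) (a := s) (b := t)
    (hcont.mono (Icc_subset_Icc hs0 le_rfl))
    (fun x hx => (hf x (le_trans hs0 hx.1)).hasDerivWithinAt)
    (by rw [hfs]; simp)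
    (by
      intro x hx
      have hx' : x ∈ Icc s t := ⟨hx.1, hx.2.le⟩
      calc ‖c x * f x‖ = ‖c x‖ * ‖f x‖ := norm_mul _ _
        _ ≤ C * ‖f x‖ := by
            apply mul_le_mul_of_nonneg_right (hC x hx') (norm_nonneg _)
        _ = C * ‖f x‖ + 0 := by ring)
    t (right_mem_Icc.2 hst.le)
  rw [gronwallBound_ε0_δ0] at key
  have : |f t| ≤ 0 := by rwa [Real.norm_eq_abs] at key
  have := abs_nonneg (f t)
  have habs : f t = 0 := by
    have := abs_eq_zero.1 (le_antisymm ‹|f t| ≤ 0› ‹0 ≤ |f t|›)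
    exact this
  linarith

/-- The unit square [0,1]² is positively invariant for the flow of
w' = r_w w(1-w), g' = r_g g(1-g-w). -/
theorem unit_square_invariant (rw rg : ℝ) (hrw : 0 < rw) (hrg : 0 < rg)
    (w g : ℝ → ℝ)
    (hw : ∀ t, 0 ≤ t → HasDerivAt w (rw * w t * (1 - w t)) t)
    (hg : ∀ t, 0 ≤ t → HasDerivAt g (rg * g t * (1 - g t - w t)) t)
    (hinit : (w 0, g 0) ∈ Icc (0 : ℝ) 1 ×ˢ Icc (0 : ℝ) 1) :
    ∀ t, 0 ≤ t → (w t, g t) ∈ Icc (0 : ℝ) 1 ×ˢ Icc (0 : ℝ) 1 := by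
  obtain ⟨hW, hG⟩ := hinit
  have contw : ContinuousOn w (Ici 0) := fun u hu =>
    ((hw u hu).continuousAt).continuousWithinAt
  have contg : ContinuousOn g (Ici 0) := fun u hu =>
    ((hg u hu).continuousAt).continuousWithinAt
  have hwle : ∀ t, 0 ≤ t → w t ≤ 1 :=
    stay_le_one w (fun u => rw * w u * (1 - w u)) hw
      (fun u hu h1 => by
        show rw * w u * (1 - w u) < 0
        have h2 : 0 < rw * w u := mul_pos hrw (lt_trans zero_lt_one h1)
        nlinarith) hW.2
  have hwnn : ∀ t, 0 ≤ t → 0 ≤ w t := by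
    apply stay_nonneg w (fun u => rw * (1 - w u))
    · intro u hu
      have := hw u hu
      have heq : rw * w u * (1 - w u) = rw * (1 - w u) * w u := by ring
      rwa [heq] at this
    · exact continuousOn_const.mul (continuousOn_const.sub contw)
    · exact hW.1
  have hgnn : ∀ t, 0 ≤ t → 0 ≤ g t := by
    apply stay_nonneg g (fun u => rg * (1 - g u - w u))
    · intro u hu
      have := hg u hu
      have heq : rg * g u * (1 - g u - w u) = rg * (1 - g u - w u) * g u := by ring
      rwa [heq] at this
    · exact continuousOn_const.mul ((continuousOn_const.sub contg).sub contw)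
    · exact hG.1
  have hgle : ∀ t, 0 ≤ t → g t ≤ 1 :=
    stay_le_one g (fun u => rg * g u * (1 - g u - w u)) hg
      (fun u hu h1 => by
        show rg * g u * (1 - g u - w u) < 0
        have h2 : 0 < rg * g u := mul_pos hrg (lt_trans zero_lt_one h1)
        have h3 := hwnn u hu
        nlinarith) hG.2
  intro t ht
  exact ⟨⟨hwnn t ht, hwle t ht⟩, hgnn t ht, hgle t ht⟩
end

section
/- For the flow π_t of the system w' = r_w w(1-w), g' = r_g g(1-g-w) with r_w, r_g > 0, every initial point y ∈ (0,1) × (0,1) satisfies π_t(y) → (1,0) as t → ∞. -/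
/-!
Each of `w`, `1 - w` and `g` solves a linear equation `f' = a(t) f` with continuous `a`, hence
equals `f(0) · exp ∫₀ᵗ a` and keeps its initial sign. So `w` stays in `(0,1)` and increases, and
`(1 - w)' = -r_w w (1 - w) ≤ -r_w w(0) ε` whenever `1 - w ≥ ε`. Once `w ≥ 1 - ε/2`, likewise
`g' ≤ -r_g ε²/2` whenever `g ≥ ε`. A function whose derivative is bounded by a negative constant
while it lies above level `ε` eventually drops below `ε` and, `ε` being a barrier, stays there.
-/

open Set Filter Topology

theorem eq_mul_exp_integral_of_hasDerivAt_mul {a f : ℝ → ℝ} (ha : ContinuousOn a (Ici 0))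
    (hf : ∀ t, 0 ≤ t → HasDerivAt f (a t * f t) t) {t : ℝ} (ht : 0 ≤ t) :
    f t = f 0 * Real.exp (∫ s in (0 : ℝ)..t, a s) := by
  -- extend `a` continuously to all of `ℝ` so that its primitive is differentiable everywhere
  set b : ℝ → ℝ := fun u => a (max u 0)
  have hb : Continuous b := ha.comp_continuous (by fun_prop) fun u => le_max_right u 0
  have hba : ∀ u, 0 ≤ u → b u = a u := fun u hu => congrArg a (max_eq_left hu)
  set A : ℝ → ℝ := fun u => ∫ s in (0 : ℝ)..u, b s
  have hA : ∀ u, HasDerivAt A (b u) u := fun u => (hb.integral_hasStrictDerivAt 0 u).hasDerivAt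
  have hAt : A t = ∫ s in (0 : ℝ)..t, a s :=
    intervalIntegral.integral_congr fun s hs => hba s (by rw [uIcc_of_le ht] at hs; exact hs.1)
  have hderiv : ∀ u, 0 ≤ u → HasDerivAt (fun u => f u * Real.exp (-A u)) 0 u := fun u hu =>
    ((hf u hu).mul (hA u).neg.exp).congr_deriv (by rw [hba u hu]; ring)
  have hconst := constant_of_has_deriv_right_zero
    (fun u hu => (hderiv u hu.1).continuousAt.continuousWithinAt)
    (fun u hu => (hderiv u hu.1).hasDerivWithinAt) t ⟨ht, le_rfl⟩
  have hA0 : A 0 = 0 := intervalIntegral.integral_same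
  simp only [hA0, neg_zero, Real.exp_zero, mul_one] at hconst
  rw [← hAt, ← hconst, mul_assoc, ← Real.exp_add, neg_add_cancel, Real.exp_zero, mul_one]

theorem pos_of_hasDerivAt_mul {a f : ℝ → ℝ} (ha : ContinuousOn a (Ici 0))
    (hf : ∀ t, 0 ≤ t → HasDerivAt f (a t * f t) t) (h0 : 0 < f 0) {t : ℝ} (ht : 0 ≤ t) :
    0 < f t := by
  rw [eq_mul_exp_integral_of_hasDerivAt_mul ha hf ht]
  positivity

theorem eventually_le_of_hasDerivAt_le_neg {f f' : ℝ → ℝ} {ε c : ℝ} (hc : 0 < c)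
    (hf : ∀ᶠ t in atTop, HasDerivAt f (f' t) t)
    (hbound : ∀ᶠ t in atTop, ε ≤ f t → f' t ≤ -c) :
    ∀ᶠ t in atTop, f t ≤ ε := by
  obtain ⟨T, hT⟩ := eventually_atTop.1 (hf.and hbound)
  have hcont : ∀ a b, T ≤ a → ContinuousOn f (Icc a b) := fun a b ha u hu =>
    (hT u (ha.trans hu.1)).1.continuousAt.continuousWithinAt
  have hderiv : ∀ a b, T ≤ a → ∀ u ∈ Ico a b, HasDerivWithinAt f (f' u) (Ici u) u :=
    fun a b ha u hu => (hT u (ha.trans hu.1)).1.hasDerivWithinAt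
  -- while `f` stays above `ε` it decreases at rate at least `c`, so it must come down to `ε`
  obtain ⟨t₀, ht₀T, ht₀⟩ : ∃ t₀, T ≤ t₀ ∧ f t₀ ≤ ε := by
    by_contra! habove
    set t := T + |f T - ε| / c
    have hTt : T ≤ t := le_add_of_nonneg_right (by positivity)
    have hlin : f t ≤ f T - c * (t - T) :=
      image_le_of_deriv_right_le_deriv_boundary (hcont T t le_rfl) (hderiv T t le_rfl)
        (B := fun s => f T - c * (s - T)) (B' := fun _ => -c) (by simp) (by fun_prop)
        (fun u _ => by simpa using ((hasDerivAt_id u).sub_const T).const_mul c |>.const_sub (f T)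
          |>.hasDerivWithinAt)
        (fun u hu => (hT u hu.1).2 (habove u hu.1).le) ⟨hTt, le_rfl⟩
    have hct : c * (t - T) = |f T - ε| := by simp only [t]; field_simp; ring
    linarith [le_abs_self (f T - ε), habove t hTt]
  -- from `t₀` on, the constant `ε` is an upper barrier
  filter_upwards [eventually_ge_atTop t₀] with t ht
  exact image_le_of_deriv_right_lt_deriv_boundary (hcont t₀ t ht₀T) (hderiv t₀ t ht₀T)
    (B := fun _ => ε) (B' := fun _ => 0) ht₀ (fun _ => hasDerivAt_const _ _)
    (fun u hu hfu => ((hT u (ht₀T.trans hu.1)).2 hfu.ge).trans_lt (neg_neg_of_pos hc))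
    ⟨ht, le_rfl⟩

theorem tendsto_zero_of_hasDerivAt_le_neg {f f' : ℝ → ℝ} (hpos : ∀ᶠ t in atTop, 0 ≤ f t)
    (hf : ∀ᶠ t in atTop, HasDerivAt f (f' t) t)
    (hbound : ∀ ε > 0, ∃ c > 0, ∀ᶠ t in atTop, ε ≤ f t → f' t ≤ -c) :
    Tendsto f atTop (𝓝 0) := by
  refine tendsto_order.2 ⟨fun a ha => ?_, fun ε hε => ?_⟩
  · filter_upwards [hpos] with t ht using ha.trans_le ht
  · obtain ⟨c, hc, hb⟩ := hbound (ε / 2) (half_pos hε)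
    filter_upwards [eventually_le_of_hasDerivAt_le_neg hc hf hb] with t ht
    linarith

section Logistic

variable {r : ℝ} {w : ℝ → ℝ}

theorem logistic_pos (hw : ∀ t, 0 ≤ t → HasDerivAt w (r * w t * (1 - w t)) t) (h0 : 0 < w 0)
    {t : ℝ} (ht : 0 ≤ t) : 0 < w t :=
  have hwc : ContinuousOn w (Ici 0) := fun t ht => (hw t ht).continuousAt.continuousWithinAt
  pos_of_hasDerivAt_mul (a := fun t => r * (1 - w t)) (by fun_prop)
    (fun t ht => (hw t ht).congr_deriv (by ring)) h0 ht

theorem logistic_lt_one (hw : ∀ t, 0 ≤ t → HasDerivAt w (r * w t * (1 - w t)) t) (h1 : w 0 < 1)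
    {t : ℝ} (ht : 0 ≤ t) : w t < 1 :=
  have hwc : ContinuousOn w (Ici 0) := fun t ht => (hw t ht).continuousAt.continuousWithinAt
  sub_pos.1 <| pos_of_hasDerivAt_mul (a := fun t => -(r * w t)) (f := fun t => 1 - w t)
    (by fun_prop) (fun t ht => ((hw t ht).const_sub 1).congr_deriv (by ring)) (sub_pos.2 h1) ht

theorem logistic_tendsto_one (hr : 0 < r)
    (hw : ∀ t, 0 ≤ t → HasDerivAt w (r * w t * (1 - w t)) t) (h0 : 0 < w 0) (h1 : w 0 < 1) :
    Tendsto w atTop (𝓝 1) := by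
  have hmono : MonotoneOn w (Ici 0) :=
    monotoneOn_of_hasDerivWithinAt_nonneg (convex_Ici 0)
      (fun t ht => (hw t ht).continuousAt.continuousWithinAt)
      (fun t ht => (hw t (interior_subset ht)).hasDerivWithinAt)
      (fun t ht => have ht : 0 ≤ t := interior_subset ht
        mul_nonneg (mul_pos hr (logistic_pos hw h0 ht)).le
          (sub_pos.2 (logistic_lt_one hw h1 ht)).le)
  have hgap : Tendsto (fun t => 1 - w t) atTop (𝓝 0) := by
    refine tendsto_zero_of_hasDerivAt_le_neg (f' := fun t => -(r * w t * (1 - w t)))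
      ((eventually_ge_atTop 0).mono fun t ht => (sub_pos.2 (logistic_lt_one hw h1 ht)).le)
      ((eventually_ge_atTop 0).mono fun t ht => (hw t ht).const_sub 1)
      fun ε hε => ⟨r * w 0 * ε, by positivity, ?_⟩
    filter_upwards [eventually_ge_atTop 0] with t ht hεt
    have hwt : w 0 ≤ w t := hmono (mem_Ici.2 le_rfl) ht ht
    have : r * w 0 * ε ≤ r * w t * (1 - w t) := by
      gcongr
      exact (mul_pos hr (logistic_pos hw h0 ht)).le
    linarith
  simpa using (tendsto_const_nhds (x := (1 : ℝ))).sub hgap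

end Logistic

theorem competition_tendsto_zero {r : ℝ} {w g : ℝ → ℝ} (hr : 0 < r) (hwc : ContinuousOn w (Ici 0))
    (hw : Tendsto w atTop (𝓝 1))
    (hg : ∀ t, 0 ≤ t → HasDerivAt g (r * g t * (1 - g t - w t)) t) (h0 : 0 < g 0) :
    Tendsto g atTop (𝓝 0) := by
  have hgc : ContinuousOn g (Ici 0) := fun t ht => (hg t ht).continuousAt.continuousWithinAt
  have hpos : ∀ t, 0 ≤ t → 0 < g t := fun t ht =>
    pos_of_hasDerivAt_mul (a := fun t => r * (1 - g t - w t)) (by fun_prop)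
      (fun t ht => (hg t ht).congr_deriv (by ring)) h0 ht
  refine tendsto_zero_of_hasDerivAt_le_neg
    ((eventually_ge_atTop 0).mono fun t ht => (hpos t ht).le)
    ((eventually_ge_atTop 0).mono hg) fun ε hε => ⟨r * ε * (ε / 2), by positivity, ?_⟩
  filter_upwards [(tendsto_order.1 hw).1 (1 - ε / 2) (by linarith)] with t hwt hεt
  have hfactor : 1 - g t - w t ≤ -(ε / 2) := by linarith
  have : g t * (1 - g t - w t) ≤ -(ε * (ε / 2)) := by nlinarith
  nlinarith

/-- Global attractivity of the woodland equilibrium: every solution of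
w' = r_w w(1-w), g' = r_g g(1-g-w) starting in the open square (0,1)²
converges to (1,0) as t → ∞. -/
theorem woodland_globally_attracting (rw rg : ℝ) (hrw : 0 < rw) (hrg : 0 < rg)
    (w g : ℝ → ℝ)
    (hw : ∀ t, 0 ≤ t → HasDerivAt w (rw * w t * (1 - w t)) t)
    (hg : ∀ t, 0 ≤ t → HasDerivAt g (rg * g t * (1 - g t - w t)) t)
    (hinit : (w 0, g 0) ∈ Ioo (0 : ℝ) 1 ×ˢ Ioo (0 : ℝ) 1) :
    Tendsto (fun t => (w t, g t)) atTop (nhds ((1 : ℝ), (0 : ℝ))) := by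
  obtain ⟨⟨hw0, hw1⟩, hg0, -⟩ := hinit
  have hwc : ContinuousOn w (Ici 0) := fun t ht => (hw t ht).continuousAt.continuousWithinAt
  have hwlim := logistic_tendsto_one hrw hw hw0 hw1
  exact hwlim.prodMk_nhds (competition_tendsto_zero hrg hwc hwlim hg hg0)
end
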